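/- arXiv:1402.2014 — 3 statements merged into one kernel-verified Lean document; each statement's English description precedes it below -/
import Mathlib

section
/- Let 0 ≤ α < β ≤ 2. Then the function φ : ℝ → ℝ defined by φ(t) = G_β(e^{2t}, 1) / G_α(e^{2t}, 1) for t ≠ 0 and φ(0) = 1 is positive definite. (Explicitly, for 0 < α < β one has φ(t) = (β/α)·sinh(αt)/sinh(βt) for t ≠ 0.) -/
open scoped ComplexOrder

/-- Logarithmic mean. -/
noncomputable def LM (x y : ℝ) : ℝ :=
  if x = y then x else (x - y) / (Real.log x - Real.log y)

/-- The mean `A_α`, with `A_0 = LM`. -/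
noncomputable def Amean (α x y : ℝ) : ℝ :=
  if x = y then x else if α = 0 then LM x y
  else α * (x ^ α + y ^ α) * (x - y) / (2 * (x ^ α - y ^ α))

/-- The mean `G_α`, with `G_0 = LM`. -/
noncomputable def Gmean (α x y : ℝ) : ℝ :=
  if x = y then x else if α = 0 then LM x y
  else α * (x * y) ^ (α / 2) * (x - y) / (x ^ α - y ^ α)

/-- The mean `H_α`, with `H_0 = LM`. -/
noncomputable def Hmean (α x y : ℝ) : ℝ :=
  if x = y then x else if α = 0 then LM x y
  else 2 * α * (x * y) ^ α * (x - y) / ((x ^ α + y ^ α) * (x ^ α - y ^ α))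

/-- The power difference mean `M_α`. -/
noncomputable def Mmean (α x y : ℝ) : ℝ :=
  if x = y then x
  else ((α - 1) / α) * (x ^ α - y ^ α) / (x ^ (α - 1) - y ^ (α - 1))

/-- A continuous real function `φ` is positive definite if every matrix
`[φ(tᵢ - tⱼ)]` is positive semidefinite (as a complex matrix). -/
def IsPosDefFun (φ : ℝ → ℝ) : Prop :=
  Continuous φ ∧ ∀ (n : ℕ) (t : Fin n → ℝ),
    Matrix.PosSemidef (Matrix.of fun i j : Fin n => (φ (t i - t j) : ℂ))

/-!
For `t ≠ 0`, `G_γ(e^{2t}, 1) = (e^{2t} - 1) / (2t · sinhc (γt))` with `sinhc x = sinh x / x`,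
so `φ t = sinhc (αt) / sinhc (βt)`. Euler's product `sinhc x = ∏ₖ (1 + x² / (kπ)²)` makes `φ` a
pointwise limit of finite products of the functions `(1 + a²t²) / (1 + b²t²)` with `a² ≤ b²`, and
each of these is the nonnegative combination `a²/b² + (1 - a²/b²) / (1 + b²t²)` of the constant `1`
and a rescaled Cauchy kernel `1 / (1 + t²) = Re (1 / (1 + it))`. Positive definite kernels are
closed under nonnegative combinations, Schur products and pointwise limits, and the Cauchy matrix
`1 / (zᵢ + z̄ⱼ)` with `Re zᵢ > 0` is, after the Cayley transform `z ↦ (1 - z) / (1 + z)`, a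
geometric series of rank-one positive semidefinite matrices.
-/

open Filter Topology Matrix Real

theorem Matrix.PosSemidef.of_tendsto {ι α : Type*} [Fintype ι] [DecidableEq ι] {l : Filter α}
    [l.NeBot] {M : α → Matrix ι ι ℂ} {A : Matrix ι ι ℂ} (hM : ∀ a, (M a).PosSemidef)
    (h : Tendsto M l (𝓝 A)) : A.PosSemidef := by
  open scoped Matrix.Norms.L2Operator MatrixOrder in
  exact Matrix.nonneg_iff_posSemidef.mp <| ge_of_tendsto' h fun a => (hM a).nonneg

theorem Complex.norm_one_sub_lt_norm_one_add {z : ℂ} (hz : 0 < z.re) : ‖1 - z‖ < ‖1 + z‖ := by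
  rw [← sq_lt_sq₀ (norm_nonneg _) (norm_nonneg _), Complex.sq_norm, Complex.sq_norm,
    Complex.normSq_apply, Complex.normSq_apply]
  simp only [Complex.sub_re, Complex.add_re, Complex.one_re, Complex.sub_im, Complex.add_im,
    Complex.one_im]
  nlinarith

theorem Matrix.posSemidef_inv_add_star {ι : Type*} [Fintype ι] [DecidableEq ι] {z : ι → ℂ}
    (hz : ∀ i, 0 < (z i).re) : (of fun i j => (z i + star (z j))⁻¹).PosSemidef := by
  have h_one_add : ∀ i, 1 + z i ≠ 0 := fun i h => by
    have := congrArg Complex.re h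
    simp only [Complex.add_re, Complex.one_re, Complex.zero_re] at this
    linarith [hz i]
  set u : ι → ℂ := fun i => (1 - z i) / (1 + z i)
  have hu : ∀ i j, ‖u i * star (u j)‖ < 1 := fun i j => by
    have hlt : ∀ i, ‖u i‖ < 1 := fun i => by
      rw [norm_div, div_lt_one (norm_pos_iff.2 (h_one_add i))]
      exact Complex.norm_one_sub_lt_norm_one_add (hz i)
    rw [norm_mul, norm_star]
    exact mul_lt_one_of_nonneg_of_lt_one_left (norm_nonneg _) (hlt i) (hlt j).le
  have h_entry : ∀ i j, (z i + star (z j))⁻¹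
      = 2 * ((1 + z i)⁻¹ * star (1 + z j)⁻¹) * (1 - u i * star (u j))⁻¹ := fun i j => by
    have h_denom : (1 + z i) * star (1 + z j) ≠ 0 :=
      mul_ne_zero (h_one_add i) (star_ne_zero.2 (h_one_add j))
    -- `(1 + z)(1 + w̄) - (1 - z)(1 - w̄) = 2 (z + w̄)`, so the entries are sums of geometric series
    have key : (1 + z i) * star (1 + z j) * (1 - u i * star (u j)) = 2 * (z i + star (z j)) := by
      simp only [u, star_div₀, div_mul_div_comm, mul_sub, mul_one, mul_div_cancel₀ _ h_denom]
      simp only [star_add, star_sub, star_one]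
      ring
    calc (z i + star (z j))⁻¹ = 2 * (2 * (z i + star (z j)))⁻¹ := by
          rw [mul_inv, ← mul_assoc, mul_inv_cancel₀ two_ne_zero, one_mul]
      _ = _ := by rw [← key, mul_inv, mul_inv, star_inv₀]; ring
  set v : ℕ → ι → ℂ := fun k i => u i ^ k / (1 + z i)
  refine PosSemidef.of_tendsto (l := atTop)
    (M := fun N => (2 : ℝ) • ∑ k ∈ Finset.range N, vecMulVec (v k) (star (v k)))
    (fun N => (posSemidef_sum _ fun k _ => posSemidef_vecMulVec_self_star _).smul
      zero_le_two) ?_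
  refine tendsto_pi_nhds.2 fun i => tendsto_pi_nhds.2 fun j => ?_
  have h_geom := ((hasSum_geometric_of_norm_lt_one (hu i j)).tendsto_sum_nat).const_mul
    (2 * ((1 + z i)⁻¹ * star (1 + z j)⁻¹))
  rw [of_apply, h_entry]
  refine h_geom.congr fun N => ?_
  simp only [smul_apply, sum_apply, vecMulVec_apply, Pi.star_apply, v, Finset.mul_sum,
    Finset.smul_sum, star_div₀, star_pow, mul_pow]
  refine Finset.sum_congr rfl fun k _ => ?_
  rw [Complex.real_smul, star_inv₀]
  push_cast
  ring

def IsPosDefKernel (ψ : ℝ → ℝ) : Prop :=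
  ∀ (n : ℕ) (t : Fin n → ℝ), (of fun i j : Fin n => (ψ (t i - t j) : ℂ)).PosSemidef

namespace IsPosDefKernel

theorem const {c : ℝ} (hc : 0 ≤ c) : IsPosDefKernel fun _ => c := fun n _ => by
  convert (posSemidef_vecMulVec_self_star (1 : Fin n → ℂ)).smul hc using 1
  ext; simp [Complex.real_smul]

theorem add {ψ₁ ψ₂ : ℝ → ℝ} (h₁ : IsPosDefKernel ψ₁) (h₂ : IsPosDefKernel ψ₂) :
    IsPosDefKernel (ψ₁ + ψ₂) := fun n t => by
  convert (h₁ n t).add (h₂ n t) using 1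
  ext; simp

theorem const_mul {ψ : ℝ → ℝ} (h : IsPosDefKernel ψ) {c : ℝ} (hc : 0 ≤ c) :
    IsPosDefKernel fun x => c * ψ x := fun n t => by
  convert (h n t).smul hc using 1
  ext; simp [Complex.real_smul]

theorem mul {ψ₁ ψ₂ : ℝ → ℝ} (h₁ : IsPosDefKernel ψ₁) (h₂ : IsPosDefKernel ψ₂) :
    IsPosDefKernel (ψ₁ * ψ₂) := fun n t => by
  have h_eq : (of fun i j => ((ψ₁ * ψ₂) (t i - t j) : ℂ))
      = (of fun i j => (ψ₁ (t i - t j) : ℂ)) ⊙ (of fun i j => (ψ₂ (t i - t j) : ℂ)) := by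
    ext; simp
  rw [h_eq]
  exact (h₁ n t).hadamard (h₂ n t)

theorem prod {ι : Type*} (s : Finset ι) {ψ : ι → ℝ → ℝ} (h : ∀ k ∈ s, IsPosDefKernel (ψ k)) :
    IsPosDefKernel fun x => ∏ k ∈ s, ψ k x := by
  classical
  induction s using Finset.induction_on with
  | empty => simpa using const zero_le_one
  | insert k s hk ih =>
    simp only [Finset.prod_insert hk]
    exact (h k (Finset.mem_insert_self k s)).mul (ih fun l hl => h l (Finset.mem_insert_of_mem hl))

theorem comp_mul {ψ : ℝ → ℝ} (h : IsPosDefKernel ψ) (c : ℝ) : IsPosDefKernel fun x => ψ (c * x) :=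
  fun n t => by simpa [mul_sub] using h n (c • t)

theorem of_tendsto {ψ : ℕ → ℝ → ℝ} {f : ℝ → ℝ} (h : ∀ N, IsPosDefKernel (ψ N))
    (h_lim : ∀ x, Tendsto (fun N => ψ N x) atTop (𝓝 (f x))) : IsPosDefKernel f := fun n t =>
  PosSemidef.of_tendsto (fun N => h N n t) <| tendsto_pi_nhds.2 fun i => tendsto_pi_nhds.2
    fun j => (Complex.continuous_ofReal.tendsto _).comp (h_lim (t i - t j))

end IsPosDefKernel

theorem isPosDefKernel_inv_one_add_sq : IsPosDefKernel fun x => (1 + x ^ 2)⁻¹ := fun n t => by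
  set z : Fin n → ℂ := fun i => 1 / 2 + t i * Complex.I
  have hK := posSemidef_inv_add_star (z := z) fun i => by simp [z]
  have h_entry : ∀ x : ℝ, (((1 + x ^ 2)⁻¹ : ℝ) : ℂ)
      = (1 / 2 : ℝ) • ((1 + x * Complex.I)⁻¹ + (1 - x * Complex.I)⁻¹) := fun x => by
    have h_prod : (1 + x * Complex.I) * (1 - x * Complex.I) = ((1 + x ^ 2 : ℝ) : ℂ) := by
      push_cast
      linear_combination (-(x : ℂ) ^ 2) * Complex.I_sq
    have h_ne : ((1 + x ^ 2 : ℝ) : ℂ) ≠ 0 := Complex.ofReal_ne_zero.2 (by positivity)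
    rw [inv_add_inv (left_ne_zero_of_mul (h_prod ▸ h_ne)) (right_ne_zero_of_mul (h_prod ▸ h_ne)),
      h_prod, Complex.real_smul]
    push_cast
    field_simp
    ring
  convert (hK.add hK.transpose).smul (by norm_num : (0 : ℝ) ≤ 1 / 2) using 1
  ext i j
  simp only [of_apply, h_entry, Matrix.smul_apply, Matrix.add_apply, transpose_apply, z]
  congr 3 <;> apply Complex.ext <;> simp <;> ring

theorem isPosDefKernel_one_add_sq_div {a b : ℝ} (hab : a ^ 2 ≤ b ^ 2) :
    IsPosDefKernel fun x => (1 + (a * x) ^ 2) / (1 + (b * x) ^ 2) := by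
  have h_sum := (IsPosDefKernel.const (div_nonneg (sq_nonneg a) (sq_nonneg b))).add
    ((isPosDefKernel_inv_one_add_sq.comp_mul b).const_mul
      (sub_nonneg.2 (div_le_one_of_le₀ hab (sq_nonneg b))))
  convert h_sum using 1
  funext x
  simp only [Pi.add_apply]
  rcases eq_or_ne b 0 with rfl | hb
  · obtain rfl : a = 0 := by simpa using hab
    simp
  · field_simp
    ring

noncomputable def sinhc (x : ℝ) : ℝ := if x = 0 then 1 else sinh x / x

@[simp]
theorem sinhc_zero : sinhc 0 = 1 := if_pos rfl

theorem sinhc_of_ne_zero {x : ℝ} (hx : x ≠ 0) : sinhc x = sinh x / x := if_neg hx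

theorem sinhc_pos (x : ℝ) : 0 < sinhc x := by
  rcases lt_trichotomy x 0 with hx | rfl | hx
  · rw [sinhc_of_ne_zero hx.ne]
    exact div_pos_of_neg_of_neg (sinh_neg_iff.2 hx) hx
  · simp
  · rw [sinhc_of_ne_zero hx.ne']
    exact div_pos (sinh_pos_iff.2 hx) hx

theorem sinhc_eq_dslope : sinhc = dslope sinh 0 := by
  ext x
  rcases eq_or_ne x 0 with rfl | hx
  · simp [Real.deriv_sinh]
  · simp [sinhc_of_ne_zero hx, dslope_of_ne _ hx, slope_def_field]

theorem continuous_sinhc : Continuous sinhc := by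
  rw [continuous_iff_continuousAt, sinhc_eq_dslope]
  intro x
  rcases eq_or_ne x 0 with rfl | hx
  · exact continuousAt_dslope_same.2 differentiable_sinh.differentiableAt
  · exact (continuousAt_dslope_of_ne hx).2 continuous_sinh.continuousAt

theorem tendsto_prod_one_add_sq_div_mul_pi (x : ℝ) :
    Tendsto (fun N : ℕ => ∏ k ∈ Finset.range N, (1 + (x / ((k + 1) * π)) ^ 2)) atTop
      (𝓝 (sinhc x)) := by
  rcases eq_or_ne x 0 with rfl | hx
  · simp
  set z : ℂ := x * Complex.I / π
  have hπ : (π : ℂ) ≠ 0 := Complex.ofReal_ne_zero.2 pi_ne_zero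
  have hxI : (x : ℂ) * Complex.I ≠ 0 := mul_ne_zero (Complex.ofReal_ne_zero.2 hx) Complex.I_ne_zero
  have h_pi_z : π * z = x * Complex.I := mul_div_cancel₀ _ hπ
  have h_factor : ∀ k : ℕ,
      1 - z ^ 2 / ((k : ℂ) + 1) ^ 2 = ((1 + (x / ((k + 1) * π)) ^ 2 : ℝ) : ℂ) := fun k => by
    have hz2 : z ^ 2 = -((x : ℂ) / π) ^ 2 := by
      rw [div_pow, mul_pow, Complex.I_sq]
      ring
    have hk : (k : ℂ) + 1 ≠ 0 := Nat.cast_add_one_ne_zero k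
    rw [hz2]
    push_cast
    field_simp
    ring
  have h_value :
      ((x : ℂ) * Complex.I)⁻¹ * Complex.sin (x * Complex.I) = ((sinh x / x : ℝ) : ℂ) := by
    rw [Complex.sin_mul_I]
    push_cast
    field_simp
  have h := (Complex.tendsto_euler_sin_prod z).const_mul ((x : ℂ) * Complex.I)⁻¹
  simp only [h_pi_z, h_factor, inv_mul_cancel_left₀ hxI, h_value, ← Complex.ofReal_prod] at h
  rw [sinhc_of_ne_zero hx]
  exact Complex.isometry_ofReal.isEmbedding.tendsto_nhds_iff.2 h

theorem isPosDefKernel_sinhc_mul_div_sinhc_mul {a b : ℝ} (hab : a ^ 2 ≤ b ^ 2) :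
    IsPosDefKernel fun x => sinhc (a * x) / sinhc (b * x) := by
  refine IsPosDefKernel.of_tendsto (ψ := fun N x => ∏ k ∈ Finset.range N,
      (1 + (a / ((k + 1) * π) * x) ^ 2) / (1 + (b / ((k + 1) * π) * x) ^ 2))
    (fun N => IsPosDefKernel.prod _ fun k _ => isPosDefKernel_one_add_sq_div ?_) fun x => ?_
  · rw [div_pow, div_pow]
    exact div_le_div_of_nonneg_right hab (sq_nonneg _)
  · refine ((tendsto_prod_one_add_sq_div_mul_pi (a * x)).div
      (tendsto_prod_one_add_sq_div_mul_pi (b * x)) (sinhc_pos _).ne').congr fun N => ?_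
    simp only [Pi.div_apply, ← Finset.prod_div_distrib, div_mul_eq_mul_div]

theorem Gmean_exp_two_mul_one {t : ℝ} (ht : t ≠ 0) (γ : ℝ) :
    Gmean γ (exp (2 * t)) 1 = (exp (2 * t) - 1) / (2 * t * sinhc (γ * t)) := by
  have hE : exp (2 * t) ≠ 1 := by simpa [exp_eq_one_iff] using ht
  rw [Gmean, if_neg hE]
  split_ifs with hγ
  · simp [hγ, LM, hE]
  · have hγt : γ * t ≠ 0 := mul_ne_zero hγ ht
    have h_sinh : sinh (γ * t) ≠ 0 := sinh_ne_zero.2 hγt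
    have h_sub : exp (2 * t) ^ γ - 1 = exp (2 * t) ^ (γ / 2) * (2 * sinh (γ * t)) := by
      rw [← exp_mul, ← exp_mul, sinh_eq, mul_div_cancel₀ _ two_ne_zero, mul_sub, ← exp_add,
        ← exp_add]
      ring_nf
      rw [exp_zero]
      ring
    rw [sinhc_of_ne_zero hγt, mul_one, one_rpow, h_sub]
    field_simp

theorem statement1_general (α β : ℝ) (hα : 0 ≤ α) (hαβ : α < β)
    (φ : ℝ → ℝ) (hφ0 : φ 0 = 1)
    (hφ : ∀ t : ℝ, t ≠ 0 →
      φ t = Gmean β (Real.exp (2 * t)) 1 / Gmean α (Real.exp (2 * t)) 1) :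
    IsPosDefFun φ := by
  have h_eq : φ = fun t => sinhc (α * t) / sinhc (β * t) := funext fun t => by
    rcases eq_or_ne t 0 with rfl | ht
    · simp [hφ0]
    · have hE : exp (2 * t) - 1 ≠ 0 := sub_ne_zero.2 (by simpa [exp_eq_one_iff] using ht)
      rw [hφ t ht, Gmean_exp_two_mul_one ht, Gmean_exp_two_mul_one ht]
      field_simp [(sinhc_pos (α * t)).ne', (sinhc_pos (β * t)).ne']
  subst h_eq
  exact ⟨(continuous_sinhc.comp (continuous_const_mul α)).div
      (continuous_sinhc.comp (continuous_const_mul β)) fun t => (sinhc_pos _).ne',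
    isPosDefKernel_sinhc_mul_div_sinhc_mul (pow_le_pow_left₀ hα hαβ.le 2)⟩

/-- If `0 ≤ α < β ≤ 2`, the function `t ↦ G_β(e^{2t},1)/G_α(e^{2t},1)` (with value `1` at
`t = 0`) is positive definite. -/
theorem statement1 (α β : ℝ) (hα : 0 ≤ α) (hαβ : α < β) (hβ : β ≤ 2)
    (φ : ℝ → ℝ) (hφ0 : φ 0 = 1)
    (hφ : ∀ t : ℝ, t ≠ 0 →
      φ t = Gmean β (Real.exp (2 * t)) 1 / Gmean α (Real.exp (2 * t)) 1) :
    IsPosDefFun φ :=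
  statement1_general α β hα hαβ φ hφ0 hφ
end

section
/- Let α ∈ ℝ with 0 < |α| ≤ 1. Then the following three functions ℝ → ℝ are positive definite: (i) t ↦ 1/cosh(αt/2), which equals H_α(e^t,1)/G_α(e^t,1) for t ≠ 0; (ii) t ↦ (αt/2)/sinh(αt/2) for t ≠ 0, extended by 1 at t = 0, which equals G_α(e^t,1)/LM(e^t,1) for t ≠ 0; (iii) t ↦ tanh(αt/2)/(αt/2) for t ≠ 0, extended by 1 at t = 0, which equals LM(e^t,1)/A_α(e^t,1) for t ≠ 0. -/
open scoped ComplexOrder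

/-!
Each kernel is exhibited as an integral of positive semidefinite matrices. Writing `xᵢ = e^{2bᵢ}`,
`1/cosh(bᵢ - bⱼ) = 2 e^{bᵢ+bⱼ} ∫₀^∞ e^{-(xᵢ+xⱼ)s} ds` and
`(bᵢ - bⱼ)/sinh(bᵢ - bⱼ) = e^{bᵢ+bⱼ} / LM(xᵢ, xⱼ) = e^{bᵢ+bⱼ} ∫₀^∞ ds / ((xᵢ+s)(xⱼ+s))`
are Gram matrices of functions of `s`. By the Schur product theorem `1/cosh²` is positive definite
too, hence so is `tanh u / u = ∫₀¹ cosh(su)⁻² ds`. Writing `u / sinh u` and `tanh u / u` as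
`(dslope sinh 0 u)⁻¹` and `dslope tanh 0 u` supplies their value `1` at `u = 0` and their continuity.
-/

open MeasureTheory Set Filter Real
open scoped Topology

namespace Matrix

variable {ι : Type*} [Fintype ι]

theorem PosSemidef.integral {Ω : Type*} [MeasurableSpace Ω] (μ : Measure Ω)
    (K : Ω → Matrix ι ι ℝ) (hK : ∀ᵐ s ∂μ, (K s).PosSemidef)
    (hint : ∀ i j, Integrable (fun s ↦ K s i j) μ) :
    (of fun i j ↦ ∫ s, K s i j ∂μ).PosSemidef := by
  have hquad (x : ι → ℝ) (A : Matrix ι ι ℝ) :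
      star x ⬝ᵥ A *ᵥ x = ∑ i, ∑ j, x i * x j * A i j := by
    simp only [dotProduct, mulVec, star_trivial, Finset.mul_sum]
    exact Finset.sum_congr rfl fun i _ ↦ Finset.sum_congr rfl fun j _ ↦ by ring
  rw [posSemidef_iff_dotProduct_mulVec]
  refine ⟨?_, fun x ↦ ?_⟩
  · ext i j
    refine integral_congr_ae (hK.mono fun s hs ↦ ?_)
    simpa using hs.isHermitian.apply i j
  · have hint' (i j : ι) : Integrable (fun s ↦ x i * x j * K s i j) μ := (hint i j).const_mul _
    have hcomm : star x ⬝ᵥ (of fun i j ↦ ∫ s, K s i j ∂μ) *ᵥ x =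
        ∫ s, star x ⬝ᵥ K s *ᵥ x ∂μ := by
      simp only [hquad, of_apply]
      rw [integral_finsetSum _ fun i _ ↦ integrable_finsetSum _ fun j _ ↦ hint' i j]
      refine Finset.sum_congr rfl fun i _ ↦ ?_
      rw [integral_finsetSum _ fun j _ ↦ hint' i j]
      exact Finset.sum_congr rfl fun j _ ↦ (integral_const_mul _ _).symm
    rw [hcomm]
    exact integral_nonneg_of_ae (hK.mono fun s hs ↦ hs.dotProduct_mulVec_nonneg x)

theorem posSemidef_integral_mul {Ω : Type*} [MeasurableSpace Ω] (μ : Measure Ω)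
    (v : Ω → ι → ℝ) (hint : ∀ i j, Integrable (fun s ↦ v s i * v s j) μ) :
    (of fun i j ↦ ∫ s, v s i * v s j ∂μ).PosSemidef :=
  PosSemidef.integral μ (fun s ↦ vecMulVec (v s) (v s))
    (ae_of_all _ fun s ↦ by simpa using posSemidef_vecMulVec_self_star (v s)) hint

open scoped MatrixOrder in
theorem PosSemidef.map_ofReal [DecidableEq ι] {M : Matrix ι ι ℝ} (hM : M.PosSemidef) :
    (M.map ((↑) : ℝ → ℂ)).PosSemidef := by
  obtain ⟨B, rfl⟩ := CStarAlgebra.nonneg_iff_eq_star_mul_self.mp hM.nonneg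
  have hmap : (star B * B).map ((↑) : ℝ → ℂ) = (B.map (↑))ᴴ * B.map (↑) := by
    ext i j
    simp [mul_apply, conjTranspose_apply]
  rw [hmap]
  exact posSemidef_conjTranspose_mul_self _

end Matrix

theorem Differentiable.continuous_dslope {𝕜 E : Type*} [NontriviallyNormedField 𝕜]
    [NormedAddCommGroup E] [NormedSpace 𝕜 E] {f : 𝕜 → E} (hf : Differentiable 𝕜 f) (a : 𝕜) :
    Continuous (dslope f a) :=
  continuousOn_univ.1 <| (continuousOn_dslope univ_mem).2 ⟨hf.continuous.continuousOn, hf a⟩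

theorem dslope_zero_of_ne {f : ℝ → ℝ} (hf : f 0 = 0) {u : ℝ} (hu : u ≠ 0) :
    dslope f 0 u = f u / u := by
  rw [dslope_of_ne _ hu, slope_def_field, hf, sub_zero, sub_zero]

theorem dslope_eq_intervalIntegral {f f' : ℝ → ℝ} (hf : ∀ x, HasDerivAt f (f' x) x)
    (hf' : Continuous f') (a b : ℝ) :
    dslope f a b = ∫ s in (0 : ℝ)..1, f' (a + (b - a) * s) := by
  rcases eq_or_ne b a with rfl | hb
  · simp [dslope_same, (hf b).deriv]
  · have hba : b - a ≠ 0 := sub_ne_zero.2 hb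
    rw [intervalIntegral.integral_comp_add_mul _ hba, mul_zero, add_zero, mul_one,
      add_sub_cancel, intervalIntegral.integral_eq_sub_of_hasDerivAt (fun x _ ↦ hf x)
        (hf'.intervalIntegrable _ _), dslope_of_ne _ hb, slope_def_field, smul_eq_mul,
        inv_mul_eq_div]

namespace Real

theorem hasDerivAt_tanh (x : ℝ) : HasDerivAt tanh (cosh x ^ 2)⁻¹ x := by
  have h : HasDerivAt (fun y ↦ sinh y / cosh y) _ x :=
    (hasDerivAt_sinh x).div (hasDerivAt_cosh x) (cosh_pos x).ne'
  rw [show tanh = fun y ↦ sinh y / cosh y from funext tanh_eq_sinh_div_cosh]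
  refine h.congr_deriv ?_
  rw [← sq, ← sq, cosh_sq_sub_sinh_sq, one_div]

theorem continuous_inv_cosh_sq : Continuous fun x ↦ (cosh x ^ 2)⁻¹ :=
  (continuous_cosh.pow 2).inv₀ fun x ↦ (pow_pos (cosh_pos x) 2).ne'

theorem dslope_sinh_zero_ne_zero (u : ℝ) : dslope sinh 0 u ≠ 0 := by
  rcases eq_or_ne u 0 with rfl | hu
  · simp [dslope_same]
  · rw [dslope_zero_of_ne sinh_zero hu]
    exact div_ne_zero (sinh_ne_zero.2 hu) hu

theorem cosh_sub_eq_exp (a b : ℝ) :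
    cosh (a - b) = (exp (2 * a) + exp (2 * b)) / (2 * exp (a + b)) := by
  rw [cosh_eq, show 2 * a = a - b + (a + b) by ring, show 2 * b = -(a - b) + (a + b) by ring,
    exp_add (a - b), exp_add (-(a - b))]
  field_simp

theorem sinh_sub_eq_exp (a b : ℝ) :
    sinh (a - b) = (exp (2 * a) - exp (2 * b)) / (2 * exp (a + b)) := by
  rw [sinh_eq, show 2 * a = a - b + (a + b) by ring, show 2 * b = -(a - b) + (a + b) by ring,
    exp_add (a - b), exp_add (-(a - b))]
  field_simp

theorem exp_two_mul_sub_one (u : ℝ) : exp (2 * u) - 1 = 2 * exp u * sinh u := by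
  rw [sinh_eq, two_mul, exp_add, exp_neg]
  field_simp

theorem exp_two_mul_add_one (u : ℝ) : exp (2 * u) + 1 = 2 * exp u * cosh u := by
  rw [cosh_eq, two_mul, exp_add, exp_neg]
  field_simp

end Real

theorem integral_Ioi_exp_neg_mul {c : ℝ} (hc : 0 < c) :
    ∫ s in Ioi (0 : ℝ), exp (-c * s) = c⁻¹ := by
  rw [integral_exp_mul_Ioi (neg_lt_zero.2 hc), mul_zero, exp_zero, neg_div_neg_eq, one_div]

theorem integral_Ioi_inv_add_mul_add {x y : ℝ} (hx : 0 < x) (hy : 0 < y) :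
    ∫ s in Ioi (0 : ℝ), ((x + s) * (y + s))⁻¹ = (LM x y)⁻¹ := by
  have hpos : ∀ s ∈ Ioi (0 : ℝ), 0 ≤ ((x + s) * (y + s))⁻¹ := fun s hs ↦ by
    have := hs.out; positivity
  rcases eq_or_ne x y with rfl | hxy
  · have hderiv : ∀ s ∈ Ici (0 : ℝ), HasDerivAt (fun s ↦ -(x + s)⁻¹) ((x + s) * (x + s))⁻¹ s :=
      fun s hs ↦ by
        have hxs : x + s ≠ 0 := by have := hs.out; positivity
        have h : HasDerivAt (fun s ↦ -(x + s)⁻¹) _ s :=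
          (((hasDerivAt_id' s).const_add x).inv hxs).neg
        exact h.congr_deriv (by field_simp)
    have hlim : Tendsto (fun s ↦ -(x + s)⁻¹) atTop (𝓝 0) := by
      simpa using (tendsto_atTop_add_const_left _ x tendsto_id).inv_tendsto_atTop.neg
    rw [integral_Ioi_of_hasDerivAt_of_nonneg' hderiv hpos hlim, LM, if_pos rfl]
    simp
  · have hderiv : ∀ s ∈ Ici (0 : ℝ), HasDerivAt
        (fun s ↦ (log (y + s) - log (x + s)) / (x - y)) ((x + s) * (y + s))⁻¹ s := fun s hs ↦ by
      have hxs : 0 < x + s := by have := hs.out; positivity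
      have hys : 0 < y + s := by have := hs.out; positivity
      have h : HasDerivAt (fun s ↦ (log (y + s) - log (x + s)) / (x - y)) _ s :=
        ((((hasDerivAt_id' s).const_add y).log hys.ne').sub
          (((hasDerivAt_id' s).const_add x).log hxs.ne')).div_const _
      refine h.congr_deriv ?_
      have hxy' : x - y ≠ 0 := sub_ne_zero.2 hxy
      field_simp
      ring
    have hlim : Tendsto (fun s ↦ (log (y + s) - log (x + s)) / (x - y)) atTop (𝓝 0) := by
      simpa [add_comm] using
        ((tendsto_log_comp_add_sub_log y).sub (tendsto_log_comp_add_sub_log x)).div_const (x - y)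
    rw [integral_Ioi_of_hasDerivAt_of_nonneg' hderiv hpos hlim, LM, if_neg hxy]
    simp only [add_zero, zero_sub, inv_div]
    ring

theorem inv_dslope_sinh_sub (a b : ℝ) :
    (dslope sinh 0 (a - b))⁻¹ = exp (a + b) * (LM (exp (2 * a)) (exp (2 * b)))⁻¹ := by
  rcases eq_or_ne a b with rfl | hab
  · rw [sub_self, dslope_same, Real.deriv_sinh, cosh_zero, LM, if_pos rfl, ← two_mul, inv_one,
      mul_inv_cancel₀ (exp_pos _).ne']
  · have hab' : a - b ≠ 0 := sub_ne_zero.2 hab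
    have hexp : exp (2 * a) - exp (2 * b) ≠ 0 := by
      rw [sub_ne_zero, Ne, exp_eq_exp]
      exact fun h ↦ hab (by linarith)
    rw [dslope_zero_of_ne sinh_zero hab', sinh_sub_eq_exp, LM, if_neg (sub_ne_zero.1 hexp),
      log_exp, log_exp]
    field_simp

namespace Matrix

variable {ι : Type*} [Fintype ι]

theorem posSemidef_inv_cosh_sub (b : ι → ℝ) : (of fun i j ↦ (cosh (b i - b j))⁻¹).PosSemidef := by
  let v (s : ℝ) (i : ι) : ℝ := exp (b i) * exp (-exp (2 * b i) * s)
  have hc (i j : ι) : 0 < exp (2 * b i) + exp (2 * b j) := by positivity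
  have hprod (i j : ι) (s : ℝ) : v s i * v s j =
      exp (b i + b j) * exp (-(exp (2 * b i) + exp (2 * b j)) * s) := by
    simp only [v, ← exp_add]
    ring_nf
  have hint (i j : ι) : Integrable (fun s ↦ v s i * v s j) (volume.restrict (Ioi 0)) := by
    simpa only [hprod] using (exp_neg_integrableOn_Ioi 0 (hc i j)).const_mul (exp (b i + b j))
  convert (posSemidef_integral_mul _ v hint).smul (zero_le_two : (0 : ℝ) ≤ 2) using 1
  ext i j
  simp only [of_apply, smul_apply, smul_eq_mul, hprod, integral_const_mul,
    integral_Ioi_exp_neg_mul (hc i j), cosh_sub_eq_exp, inv_div]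
  ring

theorem posSemidef_inv_cosh_sub_sq (b : ι → ℝ) :
    (of fun i j ↦ (cosh (b i - b j) ^ 2)⁻¹).PosSemidef := by
  have hsq : (of fun i j ↦ (cosh (b i - b j) ^ 2)⁻¹) =
      (of fun i j ↦ (cosh (b i - b j))⁻¹) ⊙ (of fun i j ↦ (cosh (b i - b j))⁻¹) := by
    ext i j
    simp [sq]
  rw [hsq]
  exact (posSemidef_inv_cosh_sub b).hadamard (posSemidef_inv_cosh_sub b)

theorem posSemidef_inv_dslope_sinh_sub (b : ι → ℝ) :
    (of fun i j ↦ (dslope sinh 0 (b i - b j))⁻¹).PosSemidef := by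
  let v (s : ℝ) (i : ι) : ℝ := exp (b i) * (exp (2 * b i) + s)⁻¹
  have hprod (i j : ι) (s : ℝ) : v s i * v s j =
      exp (b i + b j) * ((exp (2 * b i) + s) * (exp (2 * b j) + s))⁻¹ := by
    simp only [v, exp_add, mul_inv]
    ring
  have hval (i j : ι) : ∫ s in Ioi (0 : ℝ), v s i * v s j =
      (dslope sinh 0 (b i - b j))⁻¹ := by
    simp only [hprod, integral_const_mul,
      integral_Ioi_inv_add_mul_add (exp_pos (2 * b i)) (exp_pos (2 * b j)), inv_dslope_sinh_sub]
  have hint (i j : ι) : Integrable (fun s ↦ v s i * v s j) (volume.restrict (Ioi 0)) :=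
    .of_integral_ne_zero <| by
      rw [hval]
      exact inv_ne_zero (dslope_sinh_zero_ne_zero _)
  simpa only [hval] using posSemidef_integral_mul _ v hint

theorem posSemidef_dslope_tanh_sub (b : ι → ℝ) :
    (of fun i j ↦ dslope tanh 0 (b i - b j)).PosSemidef := by
  let K (s : ℝ) : Matrix ι ι ℝ := of fun i j ↦ (cosh ((b i - b j) * s) ^ 2)⁻¹
  have hK (s : ℝ) : (K s).PosSemidef := by
    simpa only [K, sub_mul] using posSemidef_inv_cosh_sub_sq fun i ↦ b i * s
  have hint (i j : ι) : Integrable (fun s ↦ K s i j) (volume.restrict (Ioc 0 1)) :=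
    (continuous_inv_cosh_sq.comp (continuous_const_mul _)).integrableOn_Ioc
  convert PosSemidef.integral _ K (ae_of_all _ hK) hint using 1
  ext i j
  simp [K, dslope_eq_intervalIntegral hasDerivAt_tanh continuous_inv_cosh_sq,
    intervalIntegral.integral_of_le zero_le_one]

end Matrix

theorem isPosDefFun_of_posSemidef {f : ℝ → ℝ} (hf : Continuous f)
    (h : ∀ (n : ℕ) (b : Fin n → ℝ), (Matrix.of fun i j ↦ f (b i - b j)).PosSemidef) :
    IsPosDefFun f :=
  ⟨hf, fun n b ↦ (h n b).map_ofReal⟩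

theorem IsPosDefFun.comp_mul_left {f : ℝ → ℝ} (hf : IsPosDefFun f) (c : ℝ) :
    IsPosDefFun fun t ↦ f (c * t) := by
  refine ⟨hf.1.comp (continuous_const_mul c), fun n t ↦ ?_⟩
  simpa only [mul_sub] using hf.2 n fun i ↦ c * t i

theorem isPosDefFun_inv_cosh : IsPosDefFun fun t ↦ (cosh t)⁻¹ :=
  isPosDefFun_of_posSemidef (continuous_cosh.inv₀ fun t ↦ (cosh_pos t).ne')
    fun _ ↦ Matrix.posSemidef_inv_cosh_sub

theorem isPosDefFun_inv_dslope_sinh : IsPosDefFun fun t ↦ (dslope sinh 0 t)⁻¹ :=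
  isPosDefFun_of_posSemidef
    ((differentiable_sinh.continuous_dslope 0).inv₀ dslope_sinh_zero_ne_zero)
    fun _ ↦ Matrix.posSemidef_inv_dslope_sinh_sub

theorem isPosDefFun_dslope_tanh : IsPosDefFun (dslope tanh 0) :=
  have hdiff : Differentiable ℝ tanh := fun x ↦ (hasDerivAt_tanh x).differentiableAt
  isPosDefFun_of_posSemidef (hdiff.continuous_dslope 0) fun _ ↦ Matrix.posSemidef_dslope_tanh_sub

section MeansAtExp

variable {α t : ℝ} (hα : α ≠ 0) (ht : t ≠ 0)
include ht

theorem LM_exp_one : LM (exp t) 1 = (exp t - 1) / t := by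
  rw [LM, if_neg (by simpa using ht), log_exp, log_one, sub_zero]

include hα

theorem Gmean_exp_one : Gmean α (exp t) 1 = α * (exp t - 1) / (2 * sinh (α * t / 2)) := by
  have hu : sinh (α * t / 2) ≠ 0 := sinh_ne_zero.2 (by positivity)
  rw [Gmean, if_neg (by simpa using ht), if_neg hα, mul_one, one_rpow, ← exp_mul, ← exp_mul,
    show t * (α / 2) = α * t / 2 by ring, show t * α = 2 * (α * t / 2) by ring,
    exp_two_mul_sub_one]
  field_simp

theorem Amean_exp_one : Amean α (exp t) 1 = α * (exp t - 1) / (2 * tanh (α * t / 2)) := by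
  have hu : sinh (α * t / 2) ≠ 0 := sinh_ne_zero.2 (by positivity)
  rw [Amean, if_neg (by simpa using ht), if_neg hα, one_rpow, ← exp_mul,
    show t * α = 2 * (α * t / 2) by ring, exp_two_mul_sub_one, exp_two_mul_add_one,
    tanh_eq_sinh_div_cosh]
  field_simp

theorem Hmean_exp_one :
    Hmean α (exp t) 1 = α * (exp t - 1) / (2 * sinh (α * t / 2) * cosh (α * t / 2)) := by
  have hu : sinh (α * t / 2) ≠ 0 := sinh_ne_zero.2 (by positivity)
  rw [Hmean, if_neg (by simpa using ht), if_neg hα, mul_one, one_rpow, ← exp_mul,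
    show t * α = 2 * (α * t / 2) by ring, exp_two_mul_sub_one, exp_two_mul_add_one,
    two_mul (α * t / 2), exp_add]
  field_simp

end MeansAtExp

theorem statement4_general (α : ℝ) (hα0 : 0 < |α|)
    (φ₁ φ₂ φ₃ : ℝ → ℝ)
    (hφ₁ : ∀ t : ℝ, φ₁ t = 1 / Real.cosh (α * t / 2))
    (hφ₂0 : φ₂ 0 = 1)
    (hφ₂ : ∀ t : ℝ, t ≠ 0 → φ₂ t = (α * t / 2) / Real.sinh (α * t / 2))
    (hφ₃0 : φ₃ 0 = 1)
    (hφ₃ : ∀ t : ℝ, t ≠ 0 → φ₃ t = Real.tanh (α * t / 2) / (α * t / 2)) :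
    (IsPosDefFun φ₁ ∧ IsPosDefFun φ₂ ∧ IsPosDefFun φ₃) ∧
    (∀ t : ℝ, t ≠ 0 →
      φ₁ t = Hmean α (Real.exp t) 1 / Gmean α (Real.exp t) 1 ∧
      φ₂ t = Gmean α (Real.exp t) 1 / LM (Real.exp t) 1 ∧
      φ₃ t = LM (Real.exp t) 1 / Amean α (Real.exp t) 1) := by
  have hα : α ≠ 0 := abs_pos.mp hα0
  have hscale (t : ℝ) (ht : t ≠ 0) : α / 2 * t ≠ 0 := by positivity
  have h₁ : φ₁ = fun t ↦ (cosh (α / 2 * t))⁻¹ := by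
    ext t
    rw [hφ₁, one_div, div_mul_eq_mul_div]
  have h₂ : φ₂ = fun t ↦ (dslope sinh 0 (α / 2 * t))⁻¹ := by
    ext t
    rcases eq_or_ne t 0 with rfl | ht
    · simp [hφ₂0, dslope_same]
    · rw [hφ₂ t ht, dslope_zero_of_ne sinh_zero (hscale t ht), inv_div, div_mul_eq_mul_div]
  have h₃ : φ₃ = fun t ↦ dslope tanh 0 (α / 2 * t) := by
    ext t
    rcases eq_or_ne t 0 with rfl | ht
    · simp [hφ₃0, dslope_same, (hasDerivAt_tanh 0).deriv]
    · rw [hφ₃ t ht, dslope_zero_of_ne tanh_zero (hscale t ht), div_mul_eq_mul_div]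
  refine ⟨⟨h₁ ▸ isPosDefFun_inv_cosh.comp_mul_left _,
    h₂ ▸ isPosDefFun_inv_dslope_sinh.comp_mul_left _,
    h₃ ▸ isPosDefFun_dslope_tanh.comp_mul_left _⟩, fun t ht ↦ ?_⟩
  have hs : sinh (α * t / 2) ≠ 0 := sinh_ne_zero.2 (by positivity)
  have he : exp t - 1 ≠ 0 := by simpa [sub_eq_zero] using ht
  rw [hφ₁, hφ₂ t ht, hφ₃ t ht, Hmean_exp_one hα ht, Gmean_exp_one hα ht, Amean_exp_one hα ht,
    LM_exp_one ht, tanh_eq_sinh_div_cosh]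
  refine ⟨?_, ?_, ?_⟩ <;> field_simp

/-- For `0 < |α| ≤ 1` the functions `1/cosh(αt/2)`, `(αt/2)/sinh(αt/2)` and
`tanh(αt/2)/(αt/2)` are positive definite, and for `t ≠ 0` they equal the ratios
`H_α/G_α`, `G_α/LM` and `LM/A_α` evaluated at `(eᵗ, 1)` respectively. -/
theorem statement4 (α : ℝ) (hα0 : 0 < |α|) (hα1 : |α| ≤ 1)
    (φ₁ φ₂ φ₃ : ℝ → ℝ)
    (hφ₁ : ∀ t : ℝ, φ₁ t = 1 / Real.cosh (α * t / 2))
    (hφ₂0 : φ₂ 0 = 1)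
    (hφ₂ : ∀ t : ℝ, t ≠ 0 → φ₂ t = (α * t / 2) / Real.sinh (α * t / 2))
    (hφ₃0 : φ₃ 0 = 1)
    (hφ₃ : ∀ t : ℝ, t ≠ 0 → φ₃ t = Real.tanh (α * t / 2) / (α * t / 2)) :
    (IsPosDefFun φ₁ ∧ IsPosDefFun φ₂ ∧ IsPosDefFun φ₃) ∧
    (∀ t : ℝ, t ≠ 0 →
      φ₁ t = Hmean α (Real.exp t) 1 / Gmean α (Real.exp t) 1 ∧
      φ₂ t = Gmean α (Real.exp t) 1 / LM (Real.exp t) 1 ∧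
      φ₃ t = LM (Real.exp t) 1 / Amean α (Real.exp t) 1) :=
  statement4_general α hα0 φ₁ φ₂ φ₃ hφ₁ hφ₂0 hφ₂ hφ₃0 hφ₃
end

section
/- Let 0 < α < β ≤ 1. Then for all x, y > 0: A_α(x,y) ≤ A_β(x,y) ≤ ((2β − α)/α)·A_α(x,y), and |A_α(x,y) − A_β(x,y)| ≤ (2(β − α)/α)·A_α(x,y). -/
open scoped ComplexOrder

section Aux

lemma sinh_convexOn : ConvexOn ℝ (Set.Ici 0) Real.sinh := by
  apply convexOn_of_deriv2_nonneg (convex_Ici 0) Real.continuous_sinh.continuousOn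
    Real.differentiable_sinh.differentiableOn
  · rw [Real.deriv_sinh]; exact Real.differentiable_cosh.differentiableOn
  · intro x hx
    rw [interior_Ici, Set.mem_Ioi] at hx
    show 0 ≤ deriv (deriv Real.sinh) x
    rw [Real.deriv_sinh, Real.deriv_cosh]
    exact (Real.sinh_pos_iff.mpr hx).le

lemma sinh_ratio {p q : ℝ} (hp : 0 ≤ p) (hpq : p ≤ q) :
    q * Real.sinh p ≤ p * Real.sinh q := by
  rcases eq_or_lt_of_le (hp.trans hpq) with hq | hq
  · have hp0 : p = 0 := le_antisymm (hpq.trans hq.symm.le) hp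
    simp [hp0, ← hq]
  have h1 : p / q ≤ 1 := (div_le_one hq).mpr hpq
  have h2 : 0 ≤ p / q := by positivity
  have hkey := sinh_convexOn.2 (Set.mem_Ici.mpr le_rfl)
    (Set.mem_Ici.mpr (hp.trans hpq)) (show (0:ℝ) ≤ 1 - p / q by linarith) h2 (by ring)
  simp only [smul_eq_mul, mul_zero, zero_add, Real.sinh_zero] at hkey
  rw [div_mul_cancel₀ _ hq.ne'] at hkey
  have := mul_le_mul_of_nonneg_left hkey hq.le
  calc q * Real.sinh p ≤ q * (p / q * Real.sinh q) := this
    _ = p * Real.sinh q := by field_simp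

lemma uch_mono {a b : ℝ} (ha : 0 < a) (hab : a ≤ b) :
    a * (Real.cosh a * Real.sinh b) ≤ b * (Real.cosh b * Real.sinh a) := by
  have h := sinh_ratio (p := b - a) (q := a + b) (by linarith) (by linarith)
  rw [Real.sinh_sub, Real.sinh_add] at h
  nlinarith [h]

lemma coth_anti {a b : ℝ} (ha : 0 < a) (hab : a ≤ b) :
    Real.cosh b * Real.sinh a ≤ Real.cosh a * Real.sinh b := by
  have h : 0 ≤ Real.sinh (b - a) := Real.sinh_nonneg_iff.mpr (by linarith)
  rw [Real.sinh_sub] at h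
  linarith

lemma Amean_comm (α x y : ℝ) : Amean α x y = Amean α y x := by
  by_cases h : x = y
  · rw [h]
  · have h' : ¬ y = x := fun h' => h h'.symm
    rw [Amean, Amean, if_neg h, if_neg h']
    by_cases hα : α = 0
    · rw [if_pos hα, if_pos hα, LM, LM, if_neg h, if_neg h', ← neg_div_neg_eq]
      congr 1 <;> ring
    · rw [if_neg hα, if_neg hα, ← neg_div_neg_eq]
      congr 1 <;> ring

lemma Amean_eq (α x y : ℝ) (hα : 0 < α) (hy : 0 < y) (hxy : y < x) :
    Amean α x y = (x - y) * (α * Real.cosh (α * ((Real.log x - Real.log y) / 2)))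
      / (2 * Real.sinh (α * ((Real.log x - Real.log y) / 2))) := by
  have hx : 0 < x := hy.trans hxy
  have hc : 0 < (Real.log x - Real.log y) / 2 := by
    have := Real.log_lt_log hy hxy
    linarith
  set c := (Real.log x - Real.log y) / 2 with hcdef
  set m := α * ((Real.log x + Real.log y) / 2) with hmdef
  have hxα : x ^ α = Real.exp (m + α * c) := by
    rw [Real.rpow_def_of_pos hx]; congr 1; rw [hmdef, hcdef]; ring
  have hyα : y ^ α = Real.exp (m - α * c) := by
    rw [Real.rpow_def_of_pos hy]; congr 1; rw [hmdef, hcdef]; ring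
  have hs : 0 < Real.sinh (α * c) := Real.sinh_pos_iff.mpr (by positivity)
  have h1 : x ^ α + y ^ α = Real.exp m * (2 * Real.cosh (α * c)) := by
    rw [hxα, hyα, Real.cosh_eq, Real.exp_add, Real.exp_sub, Real.exp_neg]
    have := Real.exp_ne_zero (α * c)
    field_simp
  have h2 : x ^ α - y ^ α = Real.exp m * (2 * Real.sinh (α * c)) := by
    rw [hxα, hyα, Real.sinh_eq, Real.exp_add, Real.exp_sub, Real.exp_neg]
    have := Real.exp_ne_zero (α * c)
    field_simp
  rw [Amean, if_neg (by linarith : ¬ x = y), if_neg hα.ne', h1, h2]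
  have hem := Real.exp_ne_zero m
  field_simp

lemma Amean_mono_aux (α β : ℝ) (hα : 0 < α) (hαβ : α < β)
    (x y : ℝ) (hy : 0 < y) (hxy : y < x) :
    Amean α x y ≤ Amean β x y ∧
    Amean β x y ≤ ((2 * β - α) / α) * Amean α x y := by
  have hβ0 : 0 < β := hα.trans hαβ
  have hc : 0 < (Real.log x - Real.log y) / 2 := by
    have := Real.log_lt_log hy hxy
    linarith
  rw [Amean_eq α x y hα hy hxy, Amean_eq β x y hβ0 hy hxy]
  set c := (Real.log x - Real.log y) / 2 with hcdef
  have hxy' : 0 < x - y := by linarith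
  have hab : α * c < β * c := mul_lt_mul_of_pos_right hαβ hc
  have ha : 0 < α * c := by positivity
  have hsa : 0 < Real.sinh (α * c) := Real.sinh_pos_iff.mpr ha
  have hsb : 0 < Real.sinh (β * c) := Real.sinh_pos_iff.mpr (ha.trans hab)
  have hca : 0 < Real.cosh (α * c) := Real.cosh_pos _
  have hcb : 0 < Real.cosh (β * c) := Real.cosh_pos _
  have h2 := uch_mono ha hab.le
  have h1 : α * (Real.cosh (α * c) * Real.sinh (β * c)) ≤
      β * (Real.cosh (β * c) * Real.sinh (α * c)) := by
    refine le_of_mul_le_mul_right ?_ hc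
    nlinarith [h2]
  constructor
  · rw [div_le_div_iff₀ (by positivity) (by positivity)]
    nlinarith [mul_le_mul_of_nonneg_left h1
      (le_of_lt (by positivity : (0:ℝ) < 2 * (x - y)))]
  · have h4 : β * (Real.cosh (β * c) * Real.sinh (α * c)) ≤
        (2 * β - α) * (Real.cosh (α * c) * Real.sinh (β * c)) := by
      have h5 := coth_anti ha hab.le
      nlinarith [h5, hsa, hsb, hca, hcb]
    have hr : ((2 * β - α) / α) *
        ((x - y) * (α * Real.cosh (α * c)) / (2 * Real.sinh (α * c))) =
        (x - y) * ((2 * β - α) * Real.cosh (α * c)) / (2 * Real.sinh (α * c)) := by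
      field_simp
    rw [hr, div_le_div_iff₀ (by positivity) (by positivity)]
    nlinarith [mul_le_mul_of_nonneg_left h4
      (le_of_lt (by positivity : (0:ℝ) < 2 * (x - y)))]

end Aux

/-- For `0 < α < β ≤ 1` and `x, y > 0`:
`A_α ≤ A_β ≤ ((2β-α)/α)·A_α` and `|A_α - A_β| ≤ (2(β-α)/α)·A_α`. -/
theorem statement17 (α β : ℝ) (hα : 0 < α) (hαβ : α < β) (hβ : β ≤ 1)
    (x y : ℝ) (hx : 0 < x) (hy : 0 < y) :
    Amean α x y ≤ Amean β x y ∧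
    Amean β x y ≤ ((2 * β - α) / α) * Amean α x y ∧
    |Amean α x y - Amean β x y| ≤ (2 * (β - α) / α) * Amean α x y := by
  have key : Amean α x y ≤ Amean β x y ∧
      Amean β x y ≤ ((2 * β - α) / α) * Amean α x y := by
    by_cases hxy : x = y
    · subst hxy
      simp only [Amean, if_pos rfl]
      have h1 : (1:ℝ) ≤ (2 * β - α) / α := by
        rw [le_div_iff₀ hα]; linarith
      exact ⟨le_rfl, le_mul_of_one_le_left hx.le h1⟩
    · rcases Ne.lt_or_gt hxy with h | h
      · rw [Amean_comm α x y, Amean_comm β x y]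
        exact Amean_mono_aux α β hα hαβ y x hx h
      · exact Amean_mono_aux α β hα hαβ x y hy h
  obtain ⟨k1, k2⟩ := key
  refine ⟨k1, k2, ?_⟩
  rw [abs_sub_comm, abs_of_nonneg (by linarith)]
  have he : (2 * (β - α) / α) * Amean α x y =
      ((2 * β - α) / α) * Amean α x y - Amean α x y := by
    field_simp
    ring
  linarith
end
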